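/- arXiv:2209.06983 — 2 statements merged into one kernel-verified Lean document; each statement's English description precedes it below -/
import Mathlib

section
/- Let X_1,...,X_T be a martingale difference sequence adapted to a filtration (F_0,...,F_{T−1}) with |X_t| ≤ b almost surely. Let V_T = ∑_{t=1}^T E[X_t² | F_{t−1}]. Then for every a, v > 0, P({∑_{t=1}^T X_t ≥ a} ∩ {V_T ≤ v}) ≤ exp(−a²/(2v + 2ab/3)). -/
/-!
Fix `0 ≤ λ` with `λb < 3` and put `g = λ²/(2(1 - λb/3))`. The Bernstein bound
`e^u ≤ 1 + u + u²/(2(1 - c/3))` for `u ≤ c < 3`, together with `E[X_t | F_{t-1}] = 0`, gives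
`E[exp(λX_t - g E[X_t² | F_{t-1}]) | F_{t-1}] ≤ 1`. Hence `exp(λ ∑ X_t - g V_T)`, a product of
factors with conditional means at most one, has expectation at most one. On the event
`{∑ X_t ≥ a, V_T ≤ v}` it is at least `exp(λa - gv)`, so by Markov's inequality the event has
probability at most `exp(gv - λa)`, and `λ = a/(v + ab/3)` makes `gv - λa = -a²/(2v + 2ab/3)`.
-/

open MeasureTheory Real Set

lemma monotone_sub_two_mul_exp_add_add_two : Monotone fun u : ℝ => (u - 2) * exp u + u + 2 := by
  refine monotone_of_hasDerivAt_nonneg (f' := fun u => (u - 1) * exp u + 1)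
    (fun u => ?_) fun u => ?_
  · have := (((hasDerivAt_id' u).sub_const 2).mul (hasDerivAt_exp u)).add (hasDerivAt_id' u)
      |>.add_const 2
    exact this.congr_deriv (by ring)
  · have h : (1 - u) * exp u ≤ exp (-u) * exp u := by gcongr; exact one_sub_le_exp_neg u
    rw [← exp_add, neg_add_cancel, exp_zero] at h
    show 0 ≤ (u - 1) * exp u + 1
    linarith

lemma two_sub_mul_exp_sub_one_sub_le_sq (u : ℝ) :
    (2 - 2 * u / 3) * (exp u - 1 - u) ≤ u ^ 2 := by
  set F : ℝ → ℝ := fun u => u ^ 2 - (2 - 2 * u / 3) * (exp u - 1 - u)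
  set p : ℝ → ℝ := fun u => (u - 2) * exp u + u + 2
  have hF (x : ℝ) : HasDerivAt F (2 / 3 * p x) x := by
    have := (hasDerivAt_pow 2 x).sub ((((hasDerivAt_id' x).const_mul 2).div_const 3
      |>.const_sub 2).mul (((hasDerivAt_exp x).sub_const 1).sub (hasDerivAt_id' x)))
    exact this.congr_deriv (by simp only [p, Pi.sub_apply]; ring)
  have hp : Monotone p := monotone_sub_two_mul_exp_add_add_two
  have hp0 : p 0 = 0 := by norm_num [p]
  have hFc : Continuous F := by fun_prop
  have hF0 : F 0 = 0 := by norm_num [F]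
  suffices 0 ≤ F u by simp only [F] at this; linarith
  -- `F' = (2/3) p` has the sign of its argument, so `F` is minimal at `0`.
  rcases le_total 0 u with hu | hu
  · have hmono := monotoneOn_of_hasDerivWithinAt_nonneg (convex_Ici 0) hFc.continuousOn
      (fun x _ => (hF x).hasDerivWithinAt) fun x hx => by
        rw [interior_Ici] at hx
        have := hp hx.le
        rw [hp0] at this
        positivity
    simpa [hF0] using hmono self_mem_Ici hu hu
  · have hanti := antitoneOn_of_hasDerivWithinAt_nonpos (convex_Iic 0) hFc.continuousOn
      (fun x _ => (hF x).hasDerivWithinAt) fun x hx => by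
        rw [interior_Iic] at hx
        have := hp hx.le
        rw [hp0] at this
        linarith
    simpa [hF0] using hanti hu self_mem_Iic hu

lemma exp_le_one_add_add_sq_div {u c : ℝ} (huc : u ≤ c) (hc : c < 3) :
    exp u ≤ 1 + u + u ^ 2 / (2 * (1 - c / 3)) := by
  have hden : 0 < 2 * (1 - c / 3) := by linarith
  have hweight : 2 * (1 - c / 3) * (exp u - 1 - u) ≤ (2 - 2 * u / 3) * (exp u - 1 - u) :=
    mul_le_mul_of_nonneg_right (by linarith) (by linarith [add_one_le_exp u])
  have := (le_div_iff₀' hden).2 (hweight.trans (two_sub_mul_exp_sub_one_sub_le_sq u))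
  linarith

section

variable {Ω : Type*} {m m0 : MeasurableSpace Ω} {μ : Measure Ω}

lemma integrable_exp_of_ae_le [IsFiniteMeasure μ] {f : Ω → ℝ} {C : ℝ}
    (hf : AEStronglyMeasurable f μ) (hfC : ∀ᵐ ω ∂μ, f ω ≤ C) :
    Integrable (fun ω => exp (f ω)) μ :=
  .of_bound (continuous_exp.comp_aestronglyMeasurable hf) (exp C) (hfC.mono fun ω h => by
    rw [Real.norm_eq_abs, abs_exp]; exact exp_le_exp.2 h)

lemma integrable_finset_prod_of_abs_le [IsFiniteMeasure μ] {ι : Type*} {s : Finset ι}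
    {f : ι → Ω → ℝ} {C : ℝ} (hf : ∀ i ∈ s, AEStronglyMeasurable (f i) μ)
    (hfC : ∀ i ∈ s, ∀ᵐ ω ∂μ, |f i ω| ≤ C) :
    Integrable (fun ω => ∏ i ∈ s, f i ω) μ := by
  refine .of_bound (Finset.aestronglyMeasurable_fun_prod s hf) (C ^ s.card) ?_
  filter_upwards [(Filter.eventually_all_finset s).2 hfC] with ω hω
  rw [Real.norm_eq_abs, Finset.abs_prod, ← Finset.prod_const]
  exact Finset.prod_le_prod (fun i _ => abs_nonneg _) hω

lemma integral_prod_Icc_le_one_of_condExp_le_one [IsProbabilityMeasure μ]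
    {ℱ : Filtration ℕ m0} {D : ℕ → Ω → ℝ} {C : ℝ} {T : ℕ}
    (hD : ∀ t ∈ Finset.Icc 1 T, StronglyMeasurable[ℱ t] (D t)) (hD0 : ∀ t, 0 ≤ D t)
    (hDC : ∀ t ∈ Finset.Icc 1 T, ∀ᵐ ω ∂μ, |D t ω| ≤ C)
    (hcond : ∀ t ∈ Finset.Icc 1 T, μ[D t | ℱ (t - 1)] ≤ᵐ[μ] 1) :
    ∫ ω, ∏ t ∈ Finset.Icc 1 T, D t ω ∂μ ≤ 1 := by
  induction T with
  | zero => simp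
  | succ T ih =>
    have hIcc : Finset.Icc 1 T ⊆ Finset.Icc 1 (T + 1) := Finset.Icc_subset_Icc_right T.le_succ
    have hlast : T + 1 ∈ Finset.Icc 1 (T + 1) := Finset.right_mem_Icc.2 T.succ_pos
    set M : Ω → ℝ := fun ω => ∏ t ∈ Finset.Icc 1 T, D t ω
    have hM : StronglyMeasurable[ℱ T] M := Finset.stronglyMeasurable_fun_prod _ fun t ht =>
      (hD t (hIcc ht)).mono (ℱ.mono (Finset.mem_Icc.1 ht).2)
    have hMint : Integrable M μ := integrable_finset_prod_of_abs_le
      (fun t ht => ((hD t (hIcc ht)).mono (ℱ.le t)).aestronglyMeasurable)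
      fun t ht => hDC t (hIcc ht)
    have hDint : Integrable (D (T + 1)) μ :=
      .of_bound ((hD _ hlast).mono (ℱ.le _)).aestronglyMeasurable C (hDC _ hlast)
    have hMDint : Integrable (M * D (T + 1)) μ :=
      hMint.mul_bdd ((hD _ hlast).mono (ℱ.le _)).aestronglyMeasurable (hDC _ hlast)
    have hstep : μ[D (T + 1) | ℱ T] ≤ᵐ[μ] 1 := by simpa using hcond _ hlast
    calc ∫ ω, ∏ t ∈ Finset.Icc 1 (T + 1), D t ω ∂μ
        = ∫ ω, (μ[M * D (T + 1) | ℱ T]) ω ∂μ := by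
          rw [integral_condExp (ℱ.le T)]
          simp_rw [Finset.prod_Icc_succ_top (Nat.le_add_left 1 T)]
          rfl
      _ = ∫ ω, M ω * (μ[D (T + 1) | ℱ T]) ω ∂μ :=
          integral_congr_ae (condExp_mul_of_stronglyMeasurable_left hM hMDint hDint)
      _ ≤ ∫ ω, M ω ∂μ := by
          refine integral_mono_of_nonneg ?_ hMint ?_
          · filter_upwards [condExp_nonneg (m := ℱ T) (.of_forall (hD0 (T + 1)))] with ω hω
            exact mul_nonneg (Finset.prod_nonneg fun t _ => hD0 t ω) hω
          · filter_upwards [hstep] with ω hω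
            exact mul_le_of_le_one_right (Finset.prod_nonneg fun t _ => hD0 t ω) hω
      _ ≤ 1 := ih (fun t ht => hD t (hIcc ht)) (fun t ht => hDC t (hIcc ht))
          fun t ht => hcond t (hIcc ht)

lemma condExp_exp_mul_le [IsFiniteMeasure μ] {Y : Ω → ℝ} {b l : ℝ} (hm : m ≤ m0)
    (hY : AEStronglyMeasurable Y μ) (hYb : ∀ᵐ ω ∂μ, |Y ω| ≤ b) (hmean : μ[Y | m] =ᵐ[μ] 0)
    (hl : 0 ≤ l) (hlb : l * b < 3) :
    μ[fun ω => exp (l * Y ω) | m] ≤ᵐ[μ]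
      fun ω => 1 + l ^ 2 / (2 * (1 - l * b / 3)) * (μ[fun ω => Y ω ^ 2 | m]) ω := by
  set g := l ^ 2 / (2 * (1 - l * b / 3))
  have hYint : Integrable Y μ := .of_bound hY b hYb
  have hY2int : Integrable (fun ω => Y ω ^ 2) μ :=
    .of_bound (hY.pow 2) (b ^ 2) (hYb.mono fun ω h => by
      rw [Real.norm_eq_abs, abs_pow]; exact pow_le_pow_left₀ (abs_nonneg _) h 2)
  have hexp : Integrable (fun ω => exp (l * Y ω)) μ :=
    integrable_exp_of_ae_le (hY.const_mul l)
      (hYb.mono fun ω h => mul_le_mul_of_nonneg_left ((le_abs_self _).trans h) hl)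
  have hquad : (fun ω => exp (l * Y ω)) ≤ᵐ[μ] fun ω => 1 + l * Y ω + g * Y ω ^ 2 := by
    filter_upwards [hYb] with ω h
    have := exp_le_one_add_add_sq_div
      (mul_le_mul_of_nonneg_left (le_abs_self _ |>.trans h) hl) hlb
    calc exp (l * Y ω) ≤ 1 + l * Y ω + (l * Y ω) ^ 2 / (2 * (1 - l * b / 3)) := this
      _ = 1 + l * Y ω + g * Y ω ^ 2 := by ring
  have hlin : μ[fun ω => 1 + l * Y ω + g * Y ω ^ 2 | m] =ᵐ[μ]
      fun ω => 1 + l * (μ[Y | m]) ω + g * (μ[fun ω => Y ω ^ 2 | m]) ω := by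
    rw [show (fun ω => 1 + l * Y ω + g * Y ω ^ 2) =
      (fun _ => 1) + l • Y + g • fun ω => Y ω ^ 2 from rfl]
    filter_upwards [condExp_add ((integrable_const 1).add (hYint.smul l)) (hY2int.smul g) m,
      condExp_add (integrable_const (1 : ℝ)) (hYint.smul l) m, condExp_smul (μ := μ) l Y m,
      condExp_smul (μ := μ) g (fun ω => Y ω ^ 2) m] with ω h1 h2 h3 h4
    simp only [Pi.add_apply, Pi.smul_apply, smul_eq_mul] at h1 h2 h3 h4
    rw [h1, h2, h3, h4, condExp_const hm]
  have hquad_int : Integrable (fun ω => 1 + l * Y ω + g * Y ω ^ 2) μ :=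
    ((integrable_const 1).add (hYint.const_mul l)).add (hY2int.const_mul g)
  filter_upwards [condExp_mono (m := m) hexp hquad_int hquad, hlin, hmean] with ω h hlin hmean
  rw [hlin, hmean, Pi.zero_apply, mul_zero, add_zero] at h
  exact h

lemma condExp_exp_mul_sub_le_one [IsFiniteMeasure μ] {Y : Ω → ℝ} {b l : ℝ} (hm : m ≤ m0)
    (hY : AEStronglyMeasurable Y μ) (hYb : ∀ᵐ ω ∂μ, |Y ω| ≤ b) (hmean : μ[Y | m] =ᵐ[μ] 0)
    (hl : 0 ≤ l) (hlb : l * b < 3) :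
    μ[fun ω => exp (l * Y ω - l ^ 2 / (2 * (1 - l * b / 3)) * (μ[fun ω => Y ω ^ 2 | m]) ω)
      | m] ≤ᵐ[μ] 1 := by
  set g := l ^ 2 / (2 * (1 - l * b / 3))
  set V := μ[fun ω => Y ω ^ 2 | m]
  have hg : 0 ≤ g := div_nonneg (sq_nonneg l) (by linarith)
  have hV : 0 ≤ᵐ[μ] V := condExp_nonneg (.of_forall fun ω => sq_nonneg (Y ω))
  have hlY : ∀ᵐ ω ∂μ, l * Y ω ≤ l * b :=
    hYb.mono fun ω h => mul_le_mul_of_nonneg_left ((le_abs_self _).trans h) hl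
  have hW : StronglyMeasurable[m] fun ω => exp (-(g * V ω)) :=
    continuous_exp.comp_stronglyMeasurable (stronglyMeasurable_condExp.const_mul g).neg
  have hsplit : (fun ω => exp (l * Y ω - g * V ω)) =
      (fun ω => exp (-(g * V ω))) * fun ω => exp (l * Y ω) := by
    funext ω
    rw [Pi.mul_apply, ← exp_add, neg_add_eq_sub]
  have hexp : Integrable (fun ω => exp (l * Y ω)) μ :=
    integrable_exp_of_ae_le (hY.const_mul l) hlY
  have hprod : Integrable (fun ω => exp (l * Y ω - g * V ω)) μ := by
    refine integrable_exp_of_ae_le (C := l * b) ((hY.const_mul l).sub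
      ((stronglyMeasurable_condExp.mono hm).aestronglyMeasurable.const_mul g)) ?_
    filter_upwards [hlY, hV] with ω h hVω
    nlinarith [mul_nonneg hg hVω]
  rw [hsplit] at hprod ⊢
  filter_upwards [condExp_mul_of_stronglyMeasurable_left hW hprod hexp,
    condExp_exp_mul_le hm hY hYb hmean hl hlb] with ω h hle
  rw [h, Pi.mul_apply, Pi.one_apply]
  calc exp (-(g * V ω)) * (μ[fun ω => exp (l * Y ω) | m]) ω
        ≤ exp (-(g * V ω)) * (1 + g * V ω) := mul_le_mul_of_nonneg_left hle (exp_pos _).le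
    _ ≤ exp (-(g * V ω)) * exp (g * V ω) := by gcongr; linarith [add_one_le_exp (g * V ω)]
    _ = 1 := by rw [← exp_add, neg_add_cancel, exp_zero]

lemma measureReal_le_exp_neg_of_integral_exp_le_one [IsFiniteMeasure μ] {Z : Ω → ℝ}
    {s : Set Ω} {θ : ℝ} (hZ : Integrable (fun ω => exp (Z ω)) μ) (hZ1 : ∫ ω, exp (Z ω) ∂μ ≤ 1)
    (hs : ∀ ω ∈ s, θ ≤ Z ω) :
    μ.real s ≤ exp (-θ) := by
  rw [exp_neg, ← one_div, le_div_iff₀' (exp_pos θ)]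
  calc exp θ * μ.real s ≤ exp θ * μ.real {ω | exp θ ≤ exp (Z ω)} :=
        mul_le_mul_of_nonneg_left (measureReal_mono fun ω hω => exp_le_exp.2 (hs ω hω))
          (exp_pos θ).le
    _ ≤ 1 :=
        (mul_meas_ge_le_integral_of_nonneg (.of_forall fun ω => (exp_pos _).le) hZ _).trans hZ1

theorem freedman_measureReal_le_exp [IsProbabilityMeasure μ] {ℱ : Filtration ℕ m0} {T : ℕ}
    {X : ℕ → Ω → ℝ} (hadapt : ∀ t ∈ Finset.Icc 1 T, StronglyMeasurable[ℱ t] (X t))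
    (hmds : ∀ t ∈ Finset.Icc 1 T, μ[X t | ℱ (t - 1)] =ᵐ[μ] 0) {b : ℝ}
    (hbdd : ∀ t ∈ Finset.Icc 1 T, ∀ᵐ ω ∂μ, |X t ω| ≤ b) {l : ℝ} (hl : 0 ≤ l) (hlb : l * b < 3)
    (a v : ℝ) :
    μ.real ({ω | a ≤ ∑ t ∈ Finset.Icc 1 T, X t ω} ∩
        {ω | ∑ t ∈ Finset.Icc 1 T, (μ[fun ω' => X t ω' ^ 2 | ℱ (t - 1)]) ω ≤ v}) ≤
      exp (l ^ 2 / (2 * (1 - l * b / 3)) * v - l * a) := by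
  set g := l ^ 2 / (2 * (1 - l * b / 3))
  have hg : 0 ≤ g := div_nonneg (sq_nonneg l) (by linarith)
  set V : ℕ → Ω → ℝ := fun t => μ[fun ω => X t ω ^ 2 | ℱ (t - 1)]
  set D : ℕ → Ω → ℝ := fun t ω => exp (l * X t ω - g * V t ω)
  have hD (t) (ht : t ∈ Finset.Icc 1 T) : StronglyMeasurable[ℱ t] (D t) :=
    continuous_exp.comp_stronglyMeasurable (((hadapt t ht).const_mul l).sub
      ((stronglyMeasurable_condExp.mono (ℱ.mono (Nat.sub_le t 1))).const_mul g))
  have hDC (t) (ht : t ∈ Finset.Icc 1 T) : ∀ᵐ ω ∂μ, |D t ω| ≤ exp (l * b) := by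
    filter_upwards [hbdd t ht, condExp_nonneg (m := ℱ (t - 1)) (μ := μ)
      (.of_forall fun ω => sq_nonneg (X t ω))] with ω hX hV
    rw [abs_exp]
    exact exp_le_exp.2 (by nlinarith [le_abs_self (X t ω), mul_nonneg hg hV])
  have hcond (t) (ht : t ∈ Finset.Icc 1 T) : μ[D t | ℱ (t - 1)] ≤ᵐ[μ] 1 :=
    condExp_exp_mul_sub_le_one (ℱ.le _) ((hadapt t ht).mono (ℱ.le t)).aestronglyMeasurable
      (hbdd t ht) (hmds t ht) hl hlb
  have hprod : (fun ω => ∏ t ∈ Finset.Icc 1 T, D t ω) = fun ω =>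
      exp (l * ∑ t ∈ Finset.Icc 1 T, X t ω - g * ∑ t ∈ Finset.Icc 1 T, V t ω) := by
    funext ω
    rw [← exp_sum, Finset.mul_sum, Finset.mul_sum, ← Finset.sum_sub_distrib]
  have hint := integrable_finset_prod_of_abs_le
    (fun t ht => ((hD t ht).mono (ℱ.le t)).aestronglyMeasurable) hDC
  have hmgf :=
    integral_prod_Icc_le_one_of_condExp_le_one hD (fun t ω => (exp_pos _).le) hDC hcond
  rw [hprod] at hint hmgf
  rw [show g * v - l * a = -(l * a - g * v) by ring]
  refine measureReal_le_exp_neg_of_integral_exp_le_one hint hmgf fun ω ⟨hS, hW⟩ => ?_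
  exact sub_le_sub (mul_le_mul_of_nonneg_left hS hl) (mul_le_mul_of_nonneg_left hW hg)

end

theorem stmt4_general {Ω : Type*} {m0 : MeasurableSpace Ω} {μ : Measure Ω} [IsProbabilityMeasure μ]
    (ℱ : Filtration ℕ m0) (T : ℕ) (X : ℕ → Ω → ℝ)
    (hadapt : ∀ t ∈ Finset.Icc 1 T, StronglyMeasurable[ℱ t] (X t))
    (hmds : ∀ t ∈ Finset.Icc 1 T, μ[X t | ℱ (t - 1)] =ᵐ[μ] 0)
    (b : ℝ) (hb : 0 < b) (hbdd : ∀ t ∈ Finset.Icc 1 T, ∀ᵐ ω ∂μ, |X t ω| ≤ b)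
    (a v : ℝ) (ha : 0 < a) (hv : 0 < v) :
    (μ ({ω | a ≤ ∑ t ∈ Finset.Icc 1 T, X t ω} ∩
        {ω | ∑ t ∈ Finset.Icc 1 T, (μ[(fun ω' => X t ω' ^ 2) | ℱ (t - 1)]) ω ≤ v})).toReal ≤
      Real.exp (-a ^ 2 / (2 * v + 2 * a * b / 3)) := by
  set c := v + a * b / 3 with hc_def
  have hc : 0 < c := by positivity
  set l := a / c
  have hlb : l * b < 3 := by rw [div_mul_eq_mul_div, div_lt_iff₀ hc]; linarith [hc_def]
  have hexponent :
      l ^ 2 / (2 * (1 - l * b / 3)) * v - l * a = -a ^ 2 / (2 * v + 2 * a * b / 3) := by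
    have h : 1 - l * b / 3 = v / c := by simp only [l]; field_simp; linarith [hc_def]
    rw [show 2 * v + 2 * a * b / 3 = 2 * c by linarith [hc_def], h]
    simp only [l]
    field_simp
    ring
  rw [← measureReal_def, ← hexponent]
  exact freedman_measureReal_le_exp hadapt hmds hbdd (by positivity) hlb a v

/-- Freedman's inequality: for a martingale difference sequence `X_1, …, X_T` with
`|X_t| ≤ b` a.s. and sum of conditional variances `V_T = ∑_t E[X_t² | F_{t−1}]`, for
every `a, v > 0`,
`P({∑_t X_t ≥ a} ∩ {V_T ≤ v}) ≤ exp(−a²/(2v + 2ab/3))`. -/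
theorem stmt4 {Ω : Type*} {m0 : MeasurableSpace Ω} {μ : Measure Ω} [IsProbabilityMeasure μ]
    (ℱ : Filtration ℕ m0) (T : ℕ) (X : ℕ → Ω → ℝ)
    (hadapt : ∀ t ∈ Finset.Icc 1 T, StronglyMeasurable[ℱ t] (X t))
    (hint : ∀ t, Integrable (X t) μ)
    (hmds : ∀ t ∈ Finset.Icc 1 T, μ[X t | ℱ (t - 1)] =ᵐ[μ] 0)
    (b : ℝ) (hb : 0 < b) (hbdd : ∀ t ∈ Finset.Icc 1 T, ∀ᵐ ω ∂μ, |X t ω| ≤ b)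
    (a v : ℝ) (ha : 0 < a) (hv : 0 < v) :
    (μ ({ω | a ≤ ∑ t ∈ Finset.Icc 1 T, X t ω} ∩
        {ω | ∑ t ∈ Finset.Icc 1 T, (μ[(fun ω' => X t ω' ^ 2) | ℱ (t - 1)]) ω ≤ v})).toReal ≤
      Real.exp (-a ^ 2 / (2 * v + 2 * a * b / 3)) :=
  stmt4_general ℱ T X hadapt hmds b hb hbdd a v ha hv
end

section
/- Let H be a Hilbert space and (N_t)_{t=0}^∞ an H-valued martingale with N_0 = 0 such that ||N_t − N_{t−1}||_H ≤ b_t almost surely for constants b_t > 0. Then for each t and any x > 0, P(||N_t||_H > x) ≤ 4·exp(−x²/(8∑_{τ=1}^t b_τ²)). Consequently, with probability at least 1 − δ, ||N_t||_H ≤ sqrt(8·(∑_{τ=1}^t b_τ²)·log(4/δ)). -/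
/-!
Pinelis's argument. In a real inner product space, for `‖d‖ ≤ b` one has
`cosh ‖x + d‖ ≤ cosh ‖x‖ * cosh b + (sinh b / b) * ⟪∇ cosh ‖x‖, d⟫`: indeed
`‖x + d‖² ≤ ‖x‖² + b² + 2⟪x, d⟫`, which is a convex combination of `(‖x‖ - b)²` and
`(‖x‖ + b)²`, and `a ↦ cosh √a` is convex and monotone on `[0, ∞)`. Along a martingale the
gradient at `N_t` is `ℱ_t`-measurable, so the linear term has expectation zero and
`E cosh ‖N_t‖ ≤ ∏ cosh b_τ ≤ exp (∑ b_τ² / 2)`. Applied to `λ N` with `λ = x / ∑ b_τ²`,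
Markov's inequality gives `P(‖N_t‖ > x) ≤ 2 exp (-x² / (2 ∑ b_τ²))`, which is sharper than
the claimed bound.
-/

open MeasureTheory Real

theorem convexOn_cosh_sqrt : ConvexOn ℝ (Set.Ici 0) fun a : ℝ => cosh √a := by
  refine ⟨convex_Ici 0, fun u hu v hv θ₁ θ₂ h₁ h₂ h => ?_⟩
  -- `cosh √a = ∑ aⁿ / (2n)!` is a series of convex functions of `a ≥ 0`.
  have hasSum (a : ℝ) (ha : 0 ≤ a) : HasSum (fun n => a ^ n / (2 * n).factorial) (cosh √a) := by
    simpa only [pow_mul, sq_sqrt ha] using hasSum_cosh √a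
  refine hasSum_le (fun n => ?_) (hasSum _ ((convex_Ici 0) hu hv h₁ h₂ h))
    (((hasSum u hu).mul_left θ₁).add ((hasSum v hv).mul_left θ₂))
  have := (convexOn_pow n).2 hu hv h₁ h₂ h
  simp only [smul_eq_mul] at this ⊢
  rw [mul_div_assoc', mul_div_assoc', ← add_div]
  gcongr

section InnerProductSpace

variable {H : Type*} [NormedAddCommGroup H] [InnerProductSpace ℝ H]

/-- The gradient of `x ↦ cosh ‖x‖`; at `x = 0` the junk value `0` is the true gradient. -/
noncomputable def gradCoshNorm (x : H) : H :=
  (sinh ‖x‖ / ‖x‖) • x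

theorem norm_gradCoshNorm (x : H) : ‖gradCoshNorm x‖ = sinh ‖x‖ := by
  rcases eq_or_ne x 0 with rfl | hx
  · simp [gradCoshNorm]
  · rw [gradCoshNorm, norm_smul, Real.norm_eq_abs, abs_div, abs_norm,
      abs_of_nonneg (sinh_nonneg_iff.2 (norm_nonneg x)), div_mul_cancel₀ _ (norm_ne_zero_iff.2 hx)]

theorem MeasureTheory.StronglyMeasurable.gradCoshNorm {Ω : Type*} {m : MeasurableSpace Ω}
    {X : Ω → H} (hX : StronglyMeasurable[m] X) :
    StronglyMeasurable[m] fun ω => _root_.gradCoshNorm (X ω) :=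
  ((measurable_sinh.comp hX.norm.measurable).div hX.norm.measurable).stronglyMeasurable.smul hX

theorem cosh_norm_add_le {x d : H} {b : ℝ} (hb : 0 < b) (hd : ‖d‖ ≤ b) :
    cosh ‖x + d‖ ≤ cosh ‖x‖ * cosh b + sinh b / b * inner ℝ (gradCoshNorm x) d := by
  rcases eq_or_ne x 0 with rfl | hx
  · simpa [gradCoshNorm, abs_of_nonneg hb.le] using hd
  set s := ‖x‖
  set y := inner ℝ x d
  have hs : 0 < s := norm_pos_iff.2 hx
  obtain ⟨hy₁, hy₂⟩ := abs_le.1 <| (abs_real_inner_le_norm x d).trans (by gcongr : s * ‖d‖ ≤ s * b)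
  have hsb : 0 < 2 * s * b := by positivity
  have hconv := convexOn_cosh_sqrt.2 (sq_nonneg (s - b)) (sq_nonneg (s + b))
    (div_nonneg (by linarith : 0 ≤ s * b - y) hsb.le)
    (div_nonneg (by linarith : 0 ≤ s * b + y) hsb.le) (by field_simp; ring)
  simp only [smul_eq_mul, sqrt_sq_eq_abs, cosh_abs] at hconv
  have hnorm : ‖x + d‖ ^ 2 ≤ s ^ 2 + b ^ 2 + 2 * y := by
    rw [norm_add_sq_real]
    nlinarith [norm_nonneg d]
  calc cosh ‖x + d‖ ≤ cosh √(s ^ 2 + b ^ 2 + 2 * y) := by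
        rw [cosh_le_cosh, abs_norm, abs_of_nonneg (sqrt_nonneg _)]
        exact le_sqrt_of_sq_le hnorm
    _ = cosh √((s * b - y) / (2 * s * b) * (s - b) ^ 2
          + (s * b + y) / (2 * s * b) * (s + b) ^ 2) := by
        congr 2
        field_simp
        ring
    _ ≤ (s * b - y) / (2 * s * b) * cosh (s - b) + (s * b + y) / (2 * s * b) * cosh (s + b) :=
        hconv
    _ = cosh s * cosh b + sinh b / b * inner ℝ (gradCoshNorm x) d := by
        rw [gradCoshNorm, real_inner_smul_left, cosh_sub, cosh_add]
        field_simp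
        ring

end InnerProductSpace

section Probability

variable {Ω : Type*} {m m0 : MeasurableSpace Ω} {μ : Measure Ω}
  {H : Type*} [NormedAddCommGroup H] [InnerProductSpace ℝ H] [CompleteSpace H]

theorem integral_inner_eq_zero_of_condExp_eq_zero [IsFiniteMeasure μ] (hm : m ≤ m0)
    {Y D : Ω → H} (hY : StronglyMeasurable[m] Y)
    (hYD : Integrable (fun ω => inner ℝ (Y ω) (D ω)) μ) (hD : Integrable D μ)
    (hD0 : μ[D | m] =ᵐ[μ] 0) :
    ∫ ω, inner ℝ (Y ω) (D ω) ∂μ = 0 := by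
  calc ∫ ω, inner ℝ (Y ω) (D ω) ∂μ = ∫ ω, (μ[fun ω => inner ℝ (Y ω) (D ω) | m]) ω ∂μ :=
        (integral_condExp hm).symm
    _ = ∫ ω, inner ℝ (Y ω) ((μ[D | m]) ω) ∂μ :=
        integral_congr_ae (condExp_bilin_of_stronglyMeasurable_left (innerSL ℝ) hY hYD hD)
    _ = 0 := by
        rw [integral_congr_ae (hD0.mono fun ω hω => by rw [hω, Pi.zero_apply, inner_zero_right])]
        simp

theorem integral_cosh_norm_add_le [IsFiniteMeasure μ] (hm : m ≤ m0) {X D : Ω → H}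
    (hX : StronglyMeasurable[m] X) (hXi : Integrable (fun ω => cosh ‖X ω‖) μ)
    (hD : Integrable D μ) (hD0 : μ[D | m] =ᵐ[μ] 0) {b : ℝ} (hb : 0 < b)
    (hDb : ∀ᵐ ω ∂μ, ‖D ω‖ ≤ b) :
    Integrable (fun ω => cosh ‖X ω + D ω‖) μ ∧
      ∫ ω, cosh ‖X ω + D ω‖ ∂μ ≤ cosh b * ∫ ω, cosh ‖X ω‖ ∂μ := by
  have hG := hX.gradCoshNorm
  have hGD : Integrable (fun ω => inner ℝ (gradCoshNorm (X ω)) (D ω)) μ := by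
    refine (hXi.mul_const b).mono' ((hG.mono hm).aestronglyMeasurable.inner hD.1) ?_
    filter_upwards [hDb] with ω hω
    calc ‖inner ℝ (gradCoshNorm (X ω)) (D ω)‖ ≤ ‖gradCoshNorm (X ω)‖ * ‖D ω‖ :=
          norm_inner_le_norm _ _
      _ ≤ cosh ‖X ω‖ * b := by
        rw [norm_gradCoshNorm]
        exact mul_le_mul (sinh_lt_cosh _).le hω (norm_nonneg _) (cosh_pos _).le
  have hmajor : Integrable (fun ω => cosh ‖X ω‖ * cosh b
      + sinh b / b * inner ℝ (gradCoshNorm (X ω)) (D ω)) μ :=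
    (hXi.mul_const _).add (hGD.const_mul _)
  have hpt : ∀ᵐ ω ∂μ, cosh ‖X ω + D ω‖ ≤
      cosh ‖X ω‖ * cosh b + sinh b / b * inner ℝ (gradCoshNorm (X ω)) (D ω) := by
    filter_upwards [hDb] with ω hω using cosh_norm_add_le hb hω
  refine ⟨hmajor.mono' ?_ ?_, ?_⟩
  · exact (continuous_cosh.comp continuous_norm).comp_aestronglyMeasurable
      ((hX.mono hm).aestronglyMeasurable.add hD.1)
  · filter_upwards [hpt] with ω hω
    rwa [Real.norm_eq_abs, abs_of_pos (cosh_pos _)]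
  · calc ∫ ω, cosh ‖X ω + D ω‖ ∂μ
        ≤ ∫ ω, cosh ‖X ω‖ * cosh b + sinh b / b * inner ℝ (gradCoshNorm (X ω)) (D ω) ∂μ :=
          integral_mono_of_nonneg (ae_of_all _ fun _ => (cosh_pos _).le) hmajor hpt
      _ = cosh b * ∫ ω, cosh ‖X ω‖ ∂μ := by
          rw [integral_add (hXi.mul_const _) (hGD.const_mul _), integral_mul_const,
            integral_const_mul, integral_inner_eq_zero_of_condExp_eq_zero hm hG hGD hD hD0]
          ring

theorem MeasureTheory.Martingale.integral_cosh_norm_le [IsProbabilityMeasure μ]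
    {ℱ : Filtration ℕ m0} {N : ℕ → Ω → H} (hN : Martingale N ℱ μ) (hN0 : ∀ᵐ ω ∂μ, N 0 ω = 0)
    {b : ℕ → ℝ} (hb : ∀ t, 0 < b t) (hbdd : ∀ t, ∀ᵐ ω ∂μ, ‖N (t + 1) ω - N t ω‖ ≤ b (t + 1))
    (t : ℕ) :
    Integrable (fun ω => cosh ‖N t ω‖) μ ∧
      ∫ ω, cosh ‖N t ω‖ ∂μ ≤ exp ((∑ τ ∈ Finset.Icc 1 t, b τ ^ 2) / 2) := by
  induction t with
  | zero =>
    have h1 : (fun ω => cosh ‖N 0 ω‖) =ᵐ[μ] fun _ => 1 := by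
      filter_upwards [hN0] with ω hω
      simp [hω]
    refine ⟨(integrable_const 1).congr h1.symm, ?_⟩
    simp [integral_congr_ae h1]
  | succ t ih =>
    have hD0 : μ[N (t + 1) - N t | ℱ t] =ᵐ[μ] 0 := by
      filter_upwards [condExp_sub (hN.integrable (t + 1)) (hN.integrable t) (ℱ t),
        hN.condExp_ae_eq t.le_succ, hN.condExp_ae_eq (le_refl t)] with ω h h₁ h₀
      simp [h, h₁, h₀]
    have hstep := integral_cosh_norm_add_le (ℱ.le t) (hN.stronglyAdapted t) ih.1
      ((hN.integrable (t + 1)).sub (hN.integrable t)) hD0 (hb (t + 1)) (hbdd t)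
    simp only [Pi.sub_apply, add_sub_cancel] at hstep
    refine ⟨hstep.1, hstep.2.trans ?_⟩
    rw [Finset.sum_Icc_succ_top (by omega), add_div, exp_add, mul_comm]
    gcongr
    · exact ih.2
    · exact cosh_le_exp_half_sq _

theorem toReal_measure_lt_le_integral_cosh [IsFiniteMeasure μ] {R : Ω → ℝ} {l : ℝ} (hl : 0 ≤ l)
    (hR : Integrable (fun ω => cosh (l * R ω)) μ) (x : ℝ) :
    (μ {ω | x < R ω}).toReal ≤ 2 * exp (-(l * x)) * ∫ ω, cosh (l * R ω) ∂μ := by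
  have hsub : {ω | x < R ω} ⊆ {ω | exp (l * x) / 2 ≤ cosh (l * R ω)} := fun ω (hω : x < R ω) => by
    show exp (l * x) / 2 ≤ cosh (l * R ω)
    have : exp (l * x) ≤ exp (l * R ω) := exp_le_exp.2 (by gcongr)
    linarith [cosh_add_sinh (l * R ω), sinh_lt_cosh (l * R ω)]
  have markov := mul_meas_ge_le_integral_of_nonneg (ae_of_all _ fun ω => (cosh_pos (l * R ω)).le)
    hR (exp (l * x) / 2)
  calc (μ {ω | x < R ω}).toReal ≤ μ.real {ω | exp (l * x) / 2 ≤ cosh (l * R ω)} :=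
        measureReal_mono hsub (measure_ne_top _ _)
    _ = 2 * exp (-(l * x)) * (exp (l * x) / 2 * μ.real {ω | exp (l * x) / 2 ≤ cosh (l * R ω)}) := by
        rw [exp_neg]
        field_simp
    _ ≤ 2 * exp (-(l * x)) * ∫ ω, cosh (l * R ω) ∂μ := by gcongr

theorem MeasureTheory.Martingale.toReal_measure_lt_norm_le [IsProbabilityMeasure μ]
    {ℱ : Filtration ℕ m0} {N : ℕ → Ω → H} (hN : Martingale N ℱ μ) (hN0 : ∀ᵐ ω ∂μ, N 0 ω = 0)
    {b : ℕ → ℝ} (hb : ∀ t, 0 < b t) (hbdd : ∀ t, ∀ᵐ ω ∂μ, ‖N (t + 1) ω - N t ω‖ ≤ b (t + 1)) (t : ℕ)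
    {x : ℝ} (hx : 0 < x) :
    (μ {ω | x < ‖N t ω‖}).toReal ≤ 2 * exp (-x ^ 2 / (2 * ∑ τ ∈ Finset.Icc 1 t, b τ ^ 2)) := by
  set S := ∑ τ ∈ Finset.Icc 1 t, b τ ^ 2
  rcases (show 0 ≤ S from Finset.sum_nonneg fun τ _ => sq_nonneg (b τ)).eq_or_lt with hS | hS
  · rw [← hS, mul_zero, div_zero, exp_zero]
    exact measureReal_le_one.trans (by norm_num)
  set l := x / S
  have hl : 0 < l := div_pos hx hS
  have hlN := (hN.smul l).integral_cosh_norm_le (b := fun τ => l * b τ)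
    (by filter_upwards [hN0] with ω hω; simp [hω]) (fun τ => mul_pos hl (hb τ))
    (fun τ => by
      filter_upwards [hbdd τ] with ω hω
      simpa [← smul_sub, norm_smul, abs_of_pos hl] using mul_le_mul_of_nonneg_left hω hl.le) t
  simp only [Pi.smul_apply, norm_smul, Real.norm_of_nonneg hl.le, mul_pow, ← Finset.mul_sum] at hlN
  calc (μ {ω | x < ‖N t ω‖}).toReal ≤ 2 * exp (-(l * x)) * ∫ ω, cosh (l * ‖N t ω‖) ∂μ :=
        toReal_measure_lt_le_integral_cosh hl.le hlN.1 x
    _ ≤ 2 * exp (-(l * x)) * exp (l ^ 2 * S / 2) := by gcongr; exact hlN.2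
    _ = 2 * exp (-x ^ 2 / (2 * S)) := by
        rw [mul_assoc, ← exp_add]
        congr 2
        simp only [l]
        field_simp
        ring

theorem one_sub_ofReal_le_measure_le [IsProbabilityMeasure μ] {f : Ω → ℝ} {x δ : ℝ} (hδ : 0 ≤ δ)
    (h : (μ {ω | x < f ω}).toReal ≤ δ) : 1 - ENNReal.ofReal δ ≤ μ {ω | f ω ≤ x} := by
  have hlt : μ {ω | x < f ω} ≤ ENNReal.ofReal δ :=
    (ENNReal.le_ofReal_iff_toReal_le (measure_ne_top _ _) hδ).2 h
  have hcompl : {ω | x < f ω} = {ω | f ω ≤ x}ᶜ := by ext; simp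
  calc 1 - ENNReal.ofReal δ ≤ 1 - μ {ω | x < f ω} := tsub_le_tsub_left hlt 1
    _ ≤ μ {ω | f ω ≤ x} := by
        rw [tsub_le_iff_right, hcompl, ← measure_univ (μ := μ)]
        exact measure_univ_le_add_compl _

end Probability

/-- Dimension-free concentration for Hilbert-space-valued martingales with bounded
differences: if `(N_t)` is an `H`-valued martingale with `N_0 = 0` and
`‖N_t − N_{t−1}‖ ≤ b_t` a.s., then for each `t` and `x > 0`,
`P(‖N_t‖ > x) ≤ 4 exp(−x²/(8 ∑_{τ=1}^t b_τ²))`, and consequently with probability at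
least `1 − δ`, `‖N_t‖ ≤ sqrt(8 (∑_{τ=1}^t b_τ²) log(4/δ))`. -/
theorem stmt5 {Ω : Type*} {m0 : MeasurableSpace Ω} {μ : Measure Ω} [IsProbabilityMeasure μ]
    {H : Type*} [NormedAddCommGroup H] [InnerProductSpace ℝ H] [CompleteSpace H]
    (ℱ : Filtration ℕ m0) (N : ℕ → Ω → H) (hN : Martingale N ℱ μ)
    (hN0 : ∀ᵐ ω ∂μ, N 0 ω = 0)
    (b : ℕ → ℝ) (hb : ∀ t, 0 < b t)
    (hbdd : ∀ t, ∀ᵐ ω ∂μ, ‖N t ω - N (t - 1) ω‖ ≤ b t) :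
    ∀ t : ℕ,
      (∀ x : ℝ, 0 < x →
        (μ {ω | x < ‖N t ω‖}).toReal ≤
          4 * Real.exp (-x ^ 2 / (8 * ∑ τ ∈ Finset.Icc 1 t, b τ ^ 2))) ∧
      (∀ δ : ℝ, 0 < δ → δ < 1 →
        1 - ENNReal.ofReal δ ≤
          μ {ω | ‖N t ω‖ ≤
            Real.sqrt (8 * (∑ τ ∈ Finset.Icc 1 t, b τ ^ 2) * Real.log (4 / δ))}) := by
  have hbdd' (t : ℕ) : ∀ᵐ ω ∂μ, ‖N (t + 1) ω - N t ω‖ ≤ b (t + 1) := by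
    simpa using hbdd (t + 1)
  intro t
  set S := ∑ τ ∈ Finset.Icc 1 t, b τ ^ 2
  have tail (x : ℝ) (hx : 0 < x) :
      (μ {ω | x < ‖N t ω‖}).toReal ≤ 4 * exp (-x ^ 2 / (8 * S)) := by
    have hu : -x ^ 2 / (2 * S) ≤ 0 := div_nonpos_of_nonpos_of_nonneg
      (neg_nonpos.2 (sq_nonneg x)) (by positivity)
    refine (hN.toReal_measure_lt_norm_le hN0 hb hbdd' t hx).trans ?_
    rw [show -x ^ 2 / (8 * S) = -x ^ 2 / (2 * S) / 4 by ring]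
    exact mul_le_mul (by norm_num) (exp_le_exp.2 (by linarith)) (exp_pos _).le (by norm_num)
  refine ⟨tail, fun δ hδ hδ1 => one_sub_ofReal_le_measure_le hδ.le ?_⟩
  rcases Nat.eq_zero_or_pos t with rfl | ht
  · have hnull : μ {ω | √(8 * S * log (4 / δ)) < ‖N 0 ω‖} = 0 := by
      refine measure_eq_zero_iff_ae_notMem.2 ?_
      filter_upwards [hN0] with ω hω
      simp [hω, sqrt_nonneg]
    simpa [hnull] using hδ.le
  · have hS : 0 < S := Finset.sum_pos (fun τ _ => pow_pos (hb τ) 2) ⟨1, by simp; omega⟩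
    have hlog : 0 < log (4 / δ) := log_pos (by rw [lt_div_iff₀ hδ]; linarith)
    calc _ ≤ 4 * exp (-√(8 * S * log (4 / δ)) ^ 2 / (8 * S)) := tail _ (by positivity)
      _ = δ := by
        rw [sq_sqrt (by positivity), show -(8 * S * log (4 / δ)) / (8 * S) = -log (4 / δ) by
          field_simp, exp_neg, exp_log (by positivity)]
        field_simp
end
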